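/- Let p > 1 and define φ(y,s) = f(y/√s) + κ/(2ps) with f and κ as above, and V(y,s) = p φ(y,s)^{p-1} - p/(p-1). With Gaussian weight ρ(y) = e^{-y²/4}/√(4π), one has ‖V(·,s)‖_{L²_ρ} → 0 as s → ∞, i.e. ∫_ℝ V(y,s)² ρ(y) dy → 0. -/
import Mathlib

noncomputable def blowupProfile (p : ℝ) (z : ℝ) : ℝ :=
  (p - 1 + ((p - 1) ^ 2 / (4 * p)) * z ^ 2) ^ (-(1 / (p - 1)) : ℝ)

noncomputable def phiProfile (p y s : ℝ) : ℝ :=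
  blowupProfile p (y / Real.sqrt s) + (p - 1) ^ (-(1 / (p - 1)) : ℝ) / (2 * p * s)

noncomputable def potentialV (p y s : ℝ) : ℝ :=
  p * (phiProfile p y s) ^ (p - 1) - p / (p - 1)

noncomputable def gaussWeight (y : ℝ) : ℝ := Real.exp (-y ^ 2 / 4) / Real.sqrt (4 * Real.pi)

theorem stmt_14 (p : ℝ) (hp : 1 < p) :
    Filter.Tendsto (fun s : ℝ => ∫ y : ℝ, (potentialV p y s) ^ 2 * gaussWeight y)
      Filter.atTop (nhds 0) := by
  have hp1 : (0:ℝ) < p - 1 := by linarith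
  have hp0 : (0:ℝ) < p := by linarith
  set κ : ℝ := (p - 1) ^ (-(1 / (p - 1)) : ℝ) with hκ
  have hκpos : 0 < κ := Real.rpow_pos_of_pos hp1 _
  set M : ℝ := κ * (1 + 1 / (2 * p)) with hM
  have hMpos : 0 < M := by positivity
  set C : ℝ := p * M ^ (p - 1) + p / (p - 1) with hC
  have hCpos : 0 < C := by positivity
  -- gaussWeight facts
  have hgpos : ∀ y : ℝ, 0 ≤ gaussWeight y := fun y => by
    unfold gaussWeight; positivity
  have hgcont : Continuous gaussWeight := by
    unfold gaussWeight
    exact (Real.continuous_exp.comp (by continuity)).div_const _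
  have hgint : MeasureTheory.Integrable gaussWeight := by
    have h := (integrable_exp_neg_mul_sq (by norm_num : (0:ℝ) < 1/4)).div_const
      (Real.sqrt (4 * Real.pi))
    refine h.congr (Filter.Eventually.of_forall fun y => ?_)
    have hy : (-(1/4 : ℝ)) * y ^ 2 = -y ^ 2 / 4 := by ring
    simp only [gaussWeight, hy]
  -- blowupProfile is positive and bounded by κ
  have hbase : ∀ z : ℝ, 0 < p - 1 + ((p - 1) ^ 2 / (4 * p)) * z ^ 2 := by
    intro z
    have : 0 ≤ ((p - 1) ^ 2 / (4 * p)) * z ^ 2 := by positivity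
    linarith
  have hbpos : ∀ z : ℝ, 0 < blowupProfile p z := fun z =>
    Real.rpow_pos_of_pos (hbase z) _
  have hble : ∀ z : ℝ, blowupProfile p z ≤ κ := by
    intro z
    refine Real.rpow_le_rpow_of_nonpos hp1 ?_ (neg_nonpos.mpr (by positivity))
    have : 0 ≤ ((p - 1) ^ 2 / (4 * p)) * z ^ 2 := by positivity
    linarith
  -- main dominated convergence
  have key := MeasureTheory.tendsto_integral_filter_of_dominated_convergence
    (μ := MeasureTheory.volume) (l := Filter.atTop)
    (F := fun s y => (potentialV p y s) ^ 2 * gaussWeight y)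
    (f := fun _ : ℝ => (0:ℝ)) (bound := fun y => C ^ 2 * gaussWeight y)
    ?_ ?_ ?_ ?_
  · simpa using key
  · -- measurability, eventually
    filter_upwards [Filter.eventually_ge_atTop (1:ℝ)] with s hs
    have hspos : (0:ℝ) < s := by linarith
    have hφpos : ∀ y : ℝ, 0 < phiProfile p y s := by
      intro y
      have h2 : 0 < κ / (2 * p * s) := by positivity
      have := hbpos (y / Real.sqrt s)
      unfold phiProfile
      rw [← hκ]
      linarith
    have hcφ : Continuous fun y : ℝ => phiProfile p y s := by
      unfold phiProfile blowupProfile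
      refine Continuous.add ?_ continuous_const
      refine Continuous.rpow_const (by continuity) fun y => Or.inl ?_
      exact ne_of_gt (hbase _)
    have hcV : Continuous fun y : ℝ => potentialV p y s := by
      unfold potentialV
      refine Continuous.sub (Continuous.mul continuous_const ?_) continuous_const
      exact hcφ.rpow_const fun y => Or.inl (ne_of_gt (hφpos y))
    exact ((hcV.pow 2).mul hgcont).aestronglyMeasurable
  · -- bound, eventually for s ≥ 1
    filter_upwards [Filter.eventually_ge_atTop (1:ℝ)] with s hs
    refine Filter.Eventually.of_forall fun y => ?_
    have hspos : (0:ℝ) < s := by linarith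
    have hφpos : 0 < phiProfile p y s := by
      have h2 : 0 < κ / (2 * p * s) := by positivity
      have := hbpos (y / Real.sqrt s)
      unfold phiProfile
      rw [← hκ]
      linarith
    have hφle : phiProfile p y s ≤ M := by
      have h1 := hble (y / Real.sqrt s)
      have h2 : κ / (2 * p * s) ≤ κ * (1 / (2 * p)) := by
        rw [mul_one_div]
        apply div_le_div_of_nonneg_left hκpos.le (by positivity)
        nlinarith
      unfold phiProfile
      rw [← hκ, hM]
      nlinarith
    have hrle : (phiProfile p y s) ^ (p - 1) ≤ M ^ (p - 1) :=
      Real.rpow_le_rpow hφpos.le hφle hp1.le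
    have hrpos : 0 < (phiProfile p y s) ^ (p - 1) := Real.rpow_pos_of_pos hφpos _
    have hVabs : |potentialV p y s| ≤ C := by
      unfold potentialV
      rw [abs_le]
      have hpp : 0 < p / (p - 1) := by positivity
      constructor
      · nlinarith
      · nlinarith
    have hV2 : (potentialV p y s) ^ 2 ≤ C ^ 2 := by
      have := abs_le.mp hVabs
      nlinarith
    rw [Real.norm_eq_abs, abs_of_nonneg (mul_nonneg (sq_nonneg _) (hgpos y))]
    exact mul_le_mul_of_nonneg_right hV2 (hgpos y)
  · -- integrable bound
    exact hgint.const_mul _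
  · -- pointwise limit
    refine Filter.Eventually.of_forall fun y => ?_
    have hV0 : Filter.Tendsto (fun s => potentialV p y s) Filter.atTop (nhds 0) := by
      have hsq : Filter.Tendsto Real.sqrt Filter.atTop Filter.atTop :=
        (tendsto_rpow_atTop (by norm_num : (0:ℝ) < 1/2)).congr
          fun x => (Real.sqrt_eq_rpow x).symm
      have hz : Filter.Tendsto (fun s : ℝ => y / Real.sqrt s) Filter.atTop (nhds 0) :=
        Filter.Tendsto.div_atTop tendsto_const_nhds hsq
      have hbc : Filter.Tendsto (fun s : ℝ => blowupProfile p (y / Real.sqrt s))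
          Filter.atTop (nhds κ) := by
        have hb : Filter.Tendsto (fun s : ℝ =>
            (p - 1 + ((p - 1) ^ 2 / (4 * p)) * (y / Real.sqrt s) ^ 2)) Filter.atTop
            (nhds (p - 1)) := by
          have := Filter.Tendsto.const_add (p - 1)
            ((hz.pow 2).const_mul ((p - 1) ^ 2 / (4 * p)))
          simpa using this
        have hlim := hb.rpow_const (p := (-(1 / (p - 1)) : ℝ)) (Or.inl (ne_of_gt hp1))
        exact hlim
      have hterm : Filter.Tendsto (fun s : ℝ => κ / (2 * p * s)) Filter.atTop (nhds 0) := by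
        refine Filter.Tendsto.div_atTop tendsto_const_nhds ?_
        exact (Filter.tendsto_id.const_mul_atTop (by positivity))
      have hφ : Filter.Tendsto (fun s => phiProfile p y s) Filter.atTop (nhds (κ + 0)) :=
        hbc.add hterm
      rw [add_zero] at hφ
      have hφr : Filter.Tendsto (fun s => (phiProfile p y s) ^ (p - 1)) Filter.atTop
          (nhds (1 / (p - 1))) := by
        have h1 := hφ.rpow_const (p := p - 1) (Or.inl (ne_of_gt hκpos))
        have h2 : κ ^ (p - 1) = 1 / (p - 1) := by
          rw [hκ, ← Real.rpow_mul hp1.le,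
            show (-(1 / (p - 1)) : ℝ) * (p - 1) = -1 by
              rw [neg_mul, one_div, inv_mul_cancel₀ hp1.ne'],
            Real.rpow_neg_one, one_div]
        rwa [h2] at h1
      have := (hφr.const_mul p).sub_const (p / (p - 1))
      have heq : p * (1 / (p - 1)) - p / (p - 1) = 0 := by ring
      rw [heq] at this
      exact this
    have := (hV0.pow 2).mul_const (gaussWeight y)
    simpa using this
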